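/- arXiv:1007.4661 — 4 statements merged into one kernel-verified Lean document; each statement's English description precedes it below -/
import Mathlib

section
/- Let A be an algebra, ρ : A → A ⊗ A linear, s^n = Σ_{k=1}^{n+1} s^n_k and t the signed cyclic shift. If T : A^{⊗(n+2)} → ℂ is a cyclic linear functional (i.e. T ∘ t = T), then T(s^n(t(x))) = T(s^n(x)) for all x ∈ A^{⊗(n+1)}. -/
open scoped TensorProduct
open PiTensorProduct

/-- The space of `n`-chains `C_n(A,A) = A^{⊗(n+1)}` ((n+1)-fold tensor power). -/
abbrev Ch (A : Type) [AddCommGroup A] [Module ℂ A] (n : ℕ) : Type :=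
  ⨂[ℂ] (_ : Fin (n + 1)), A

variable {A : Type} [Ring A] [Algebra ℂ A]

/-- `t` is the signed cyclic shift on `A^{⊗(n+1)}`:
`t(a_1 ⊗ ⋯ ⊗ a_{n+1}) = (-1)^n (a_{n+1} ⊗ a_1 ⊗ ⋯ ⊗ a_n)`. -/
def IsCyclicShift (n : ℕ) (t : Ch A n →ₗ[ℂ] Ch A n) : Prop :=
  ∀ a : Fin (n + 1) → A,
    t (tprod ℂ a) = ((-1 : ℂ)) ^ n • tprod ℂ (fun i => a (i - 1))

/-- The tuple obtained from `a : Fin (n+1) → A` by replacing the entry in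
(0-based) slot `k` by the two entries `u, v` (in slots `k`, `k+1`). -/
def slotIns {n : ℕ} (a : Fin (n + 1) → A) (k : Fin (n + 1)) (u v : A) :
    Fin (n + 2) → A := fun i =>
  if h : (i : ℕ) < (k : ℕ) then a ⟨i, by have := k.isLt; omega⟩
  else if (i : ℕ) = (k : ℕ) then u
  else if (i : ℕ) = (k : ℕ) + 1 then v
  else a ⟨(i : ℕ) - 1, by have := i.isLt; omega⟩

/-- `s` is the map `s^n_{k+1} : A^{⊗(n+1)} → A^{⊗(n+2)}` (paper's 1-based index `k+1`),
`s^n_{k+1}(a_1 ⊗ ⋯ ⊗ a_{n+1}) = (-1)^{k+1} a_1 ⊗ ⋯ ⊗ ρ(a_{k+1}) ⊗ ⋯ ⊗ a_{n+1}`,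
where `ρ(a_{k+1})`, written as a finite sum of elementary tensors `u ⊗ v`,
occupies two consecutive slots. -/
def IsS (ρ : A →ₗ[ℂ] A ⊗[ℂ] A) (n : ℕ) (k : Fin (n + 1))
    (s : Ch A n →ₗ[ℂ] Ch A (n + 1)) : Prop :=
  ∀ (a : Fin (n + 1) → A) (uv : List (A × A)),
    ρ (a k) = (uv.map fun p => p.1 ⊗ₜ[ℂ] p.2).sum →
    s (tprod ℂ a) =
      ((-1 : ℂ)) ^ ((k : ℕ) + 1) • (uv.map fun p => tprod ℂ (slotIns a k p.1 p.2)).sum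

/-- `d` is the face map `d^n_0 : A^{⊗(n+2)} → A^{⊗(n+1)}`,
`d^n_0(a_1 ⊗ ⋯ ⊗ a_{n+2}) = a_2 ⊗ ⋯ ⊗ a_{n+1} ⊗ (a_{n+2} a_1)`. -/
def IsD0 (n : ℕ) (d : Ch A (n + 1) →ₗ[ℂ] Ch A n) : Prop :=
  ∀ a : Fin (n + 2) → A,
    d (tprod ℂ a) = tprod ℂ (fun j : Fin (n + 1) =>
      if (j : ℕ) < n then a j.succ else a (Fin.last (n + 1)) * a 0)

/-- `d` is the signed face map `d^n_i : A^{⊗(n+2)} → A^{⊗(n+1)}` for `1 ≤ i ≤ n+1`,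
`d^n_i(a_1 ⊗ ⋯ ⊗ a_{n+2}) = (-1)^i a_1 ⊗ ⋯ ⊗ (a_i a_{i+1}) ⊗ ⋯ ⊗ a_{n+2}`. -/
def IsDmid (n : ℕ) (i : ℕ) (d : Ch A (n + 1) →ₗ[ℂ] Ch A n) : Prop :=
  ∀ a : Fin (n + 2) → A,
    d (tprod ℂ a) = ((-1 : ℂ)) ^ i • tprod ℂ (fun j : Fin (n + 1) =>
      if (j : ℕ) + 1 < i then a j.castSucc
      else if (j : ℕ) + 1 = i then a j.castSucc * a j.succ
      else a j.succ)

lemma fin_sub_one_val {m : ℕ} (x : Fin (m + 1)) :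
    ((x - 1 : Fin (m + 1)) : ℕ) = if (x : ℕ) = 0 then m else (x : ℕ) - 1 := by
  rw [Fin.coe_sub_one]
  simp only [Fin.ext_iff, Fin.val_zero]

lemma slotIns_of_lt {n : ℕ} (a : Fin (n + 1) → A) (k : Fin (n + 1)) (u v : A)
    (i : Fin (n + 2)) (x : Fin (n + 1)) (h : (i : ℕ) < (k : ℕ)) (hx : (x : ℕ) = (i : ℕ)) :
    slotIns a k u v i = a x := by
  simp only [slotIns]
  rw [dif_pos h]
  congr 1
  apply Fin.ext
  exact hx.symm

lemma slotIns_eq_u {n : ℕ} (a : Fin (n + 1) → A) (k : Fin (n + 1)) (u v : A)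
    (i : Fin (n + 2)) (h : (i : ℕ) = (k : ℕ)) : slotIns a k u v i = u := by
  simp only [slotIns]
  rw [dif_neg (by omega), if_pos h]

lemma slotIns_eq_v {n : ℕ} (a : Fin (n + 1) → A) (k : Fin (n + 1)) (u v : A)
    (i : Fin (n + 2)) (h : (i : ℕ) = (k : ℕ) + 1) : slotIns a k u v i = v := by
  simp only [slotIns]
  rw [dif_neg (by omega), if_neg (by omega), if_pos h]

lemma slotIns_of_gt {n : ℕ} (a : Fin (n + 1) → A) (k : Fin (n + 1)) (u v : A)
    (i : Fin (n + 2)) (x : Fin (n + 1)) (h : (k : ℕ) + 1 < (i : ℕ))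
    (hx : (x : ℕ) = (i : ℕ) - 1) : slotIns a k u v i = a x := by
  simp only [slotIns]
  rw [dif_neg (by omega), if_neg (by omega), if_neg (by omega)]
  congr 1
  apply Fin.ext
  exact hx.symm

lemma slotIns_shift {n : ℕ} (a : Fin (n + 1) → A) (k : Fin (n + 1)) (hk : (k : ℕ) ≠ 0)
    (u v : A) :
    (fun i : Fin (n + 2) => slotIns a (k - 1) u v (i - 1)) =
      slotIns (fun j => a (j - 1)) k u v := by
  have hkl := k.isLt
  have hj : ((k - 1 : Fin (n + 1)) : ℕ) = (k : ℕ) - 1 := by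
    rw [fin_sub_one_val, if_neg hk]
  funext i
  have hil := i.isLt
  by_cases h0 : (i : ℕ) = 0
  · have hi : ((i - 1 : Fin (n + 2)) : ℕ) = n + 1 := by rw [fin_sub_one_val, if_pos h0]
    rw [slotIns_of_gt a (k - 1) u v (i - 1) (Fin.last n) (by omega)
        (by rw [Fin.val_last]; omega),
      slotIns_of_lt _ k u v i (i.castLT (by omega)) (by omega) (by simp)]
    congr 1
    apply Fin.ext
    rw [fin_sub_one_val]
    simp only [Fin.coe_castLT, h0, if_pos, Fin.val_last]
  · have hi : ((i - 1 : Fin (n + 2)) : ℕ) = (i : ℕ) - 1 := by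
      rw [fin_sub_one_val, if_neg h0]
    rcases Nat.lt_trichotomy (i : ℕ) (k : ℕ) with hlt | heq | hgt
    · rw [slotIns_of_lt a (k - 1) u v (i - 1) ((i - 1).castLT (by omega)) (by omega) (by simp),
        slotIns_of_lt _ k u v i (i.castLT (by omega)) (by omega) (by simp)]
      congr 1
      apply Fin.ext
      simp only [fin_sub_one_val, Fin.coe_castLT, hi]
      split_ifs <;> omega
    · rw [slotIns_eq_u a (k - 1) u v (i - 1) (by omega),
        slotIns_eq_u _ k u v i (by omega)]
    · rcases Nat.eq_or_lt_of_le hgt with heq1 | hgt1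
      · rw [slotIns_eq_v a (k - 1) u v (i - 1) (by omega),
          slotIns_eq_v _ k u v i (by omega)]
      · rw [slotIns_of_gt a (k - 1) u v (i - 1) ((i - 1 - 1).castLT (by
            rw [fin_sub_one_val]; rw [if_neg (by omega)]; omega)) (by omega) (by
            simp only [Fin.coe_castLT]; rw [fin_sub_one_val, if_neg (by omega)]),
          slotIns_of_gt _ k u v i ((i - 1).castLT (by omega))
            (by omega) (by simp only [Fin.coe_castLT]; exact hi)]
        congr 1
        apply Fin.ext
        simp only [fin_sub_one_val, Fin.coe_castLT, hi]
        split_ifs <;> omega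

lemma slotIns_shift0 {n : ℕ} (a : Fin (n + 1) → A) (u v : A) :
    (fun i : Fin (n + 2) => slotIns a ((0 : Fin (n + 1)) - 1) u v (i - 1 - 1)) =
      slotIns (fun j => a (j - 1)) 0 u v := by
  have hj : (((0 : Fin (n + 1)) - 1 : Fin (n + 1)) : ℕ) = n := by
    rw [fin_sub_one_val, if_pos (by simp)]
  funext i
  have hil := i.isLt
  by_cases h0 : (i : ℕ) = 0
  · have hi : ((i - 1 - 1 : Fin (n + 2)) : ℕ) = n := by
      rw [fin_sub_one_val, fin_sub_one_val, if_pos h0, if_neg (by omega)]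
      omega
    rw [slotIns_eq_u a (0 - 1) u v (i - 1 - 1) (by omega),
      slotIns_eq_u _ 0 u v i (by simpa using h0)]
  · by_cases h1 : (i : ℕ) = 1
    · have hi : ((i - 1 - 1 : Fin (n + 2)) : ℕ) = n + 1 := by
        rw [fin_sub_one_val, fin_sub_one_val, if_neg h0, if_pos (by omega)]
      rw [slotIns_eq_v a (0 - 1) u v (i - 1 - 1) (by omega),
        slotIns_eq_v _ 0 u v i (by simp; omega)]
    · have hi : ((i - 1 - 1 : Fin (n + 2)) : ℕ) = (i : ℕ) - 2 := by
        rw [fin_sub_one_val, fin_sub_one_val, if_neg h0, if_neg (by omega)]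
        omega
      rw [slotIns_of_lt a (0 - 1) u v (i - 1 - 1) ((i - 1 - 1).castLT (by omega))
          (by omega) (by simp),
        slotIns_of_gt _ 0 u v i ((i - 1).castLT (by rw [fin_sub_one_val, if_neg h0]; omega))
          (by simp; omega) (by simp only [Fin.coe_castLT]; rw [fin_sub_one_val, if_neg h0])]
      congr 1
      apply Fin.ext
      simp only [fin_sub_one_val, Fin.coe_castLT, hi]
      split_ifs <;> omega

private lemma exists_tensor_list (x : A ⊗[ℂ] A) :
    ∃ uv : List (A × A), x = (uv.map fun p => p.1 ⊗ₜ[ℂ] p.2).sum := by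
  induction x using TensorProduct.induction_on with
  | zero => exact ⟨[], rfl⟩
  | tmul u v => exact ⟨[(u, v)], by simp⟩
  | add x y hx hy =>
      obtain ⟨l₁, h₁⟩ := hx
      obtain ⟨l₂, h₂⟩ := hy
      exact ⟨l₁ ++ l₂, by simp [h₁, h₂]⟩

private lemma key_aux (n : ℕ) (ρ : A →ₗ[ℂ] A ⊗[ℂ] A)
    (s : Fin (n + 1) → (Ch A n →ₗ[ℂ] Ch A (n + 1))) (hs : ∀ k, IsS ρ n k (s k))
    (t : Ch A n →ₗ[ℂ] Ch A n) (ht : IsCyclicShift n t)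
    (t' : Ch A (n + 1) →ₗ[ℂ] Ch A (n + 1)) (ht' : IsCyclicShift (n + 1) t')
    (T : Ch A (n + 1) →ₗ[ℂ] ℂ) (hT : ∀ x, T (t' x) = T x)
    (k : Fin (n + 1)) (a : Fin (n + 1) → A) :
    T (s k (t (tprod ℂ a))) = T (s (k - 1) (tprod ℂ a)) := by
  obtain ⟨uv, huv⟩ := exists_tensor_list (ρ (a (k - 1)))
  have h2 := hs k (fun j => a (j - 1)) uv huv
  have h3 := hs (k - 1) a uv huv
  have hL : s k (t (tprod ℂ a)) = ((-1 : ℂ)) ^ (n + ((k : ℕ) + 1)) •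
      (uv.map fun p => tprod ℂ (slotIns (fun j => a (j - 1)) k p.1 p.2)).sum := by
    rw [ht, map_smul, h2, smul_smul, ← pow_add]
  by_cases hk : (k : ℕ) = 0
  · have hk0 : k = 0 := Fin.ext (by simpa using hk)
    subst hk0
    have hj : (((0 : Fin (n + 1)) - 1 : Fin (n + 1)) : ℕ) = n := by
      rw [fin_sub_one_val, if_pos (by simp)]
    have hel : ∀ u v : A,
        t' (t' (tprod ℂ (slotIns a ((0 : Fin (n + 1)) - 1) u v))) =
          tprod ℂ (slotIns (fun j => a (j - 1)) (0 : Fin (n + 1)) u v) := by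
      intro u v
      rw [ht', map_smul, ht', smul_smul, ← pow_add,
        (Even.neg_one_pow ⟨n + 1, rfl⟩ : ((-1 : ℂ)) ^ ((n + 1) + (n + 1)) = 1), one_smul,
        ← slotIns_shift0 a u v]
    have hR : t' (t' (s ((0 : Fin (n + 1)) - 1) (tprod ℂ a))) =
        ((-1 : ℂ)) ^ ((((0 : Fin (n + 1)) - 1 : Fin (n + 1)) : ℕ) + 1) •
          (uv.map fun p =>
            tprod ℂ (slotIns (fun j => a (j - 1)) (0 : Fin (n + 1)) p.1 p.2)).sum := by
      rw [h3, map_smul, map_smul, map_list_sum, List.map_map, map_list_sum, List.map_map]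
      congr 1
      exact congrArg List.sum (List.map_congr_left fun p _ => by simpa using hel p.1 p.2)
    have hmain : s 0 (t (tprod ℂ a)) = t' (t' (s ((0 : Fin (n + 1)) - 1) (tprod ℂ a))) := by
      rw [hL, hR, hj, show n + (((0 : Fin (n + 1)) : ℕ) + 1) = n + 1 by simp]
    rw [hmain, hT, hT]
  · have hj : ((k - 1 : Fin (n + 1)) : ℕ) = (k : ℕ) - 1 := by
      rw [fin_sub_one_val, if_neg hk]
    have hel : ∀ u v : A,
        t' (tprod ℂ (slotIns a (k - 1) u v)) =
          ((-1 : ℂ)) ^ (n + 1) • tprod ℂ (slotIns (fun j => a (j - 1)) k u v) := by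
      intro u v
      rw [ht', ← slotIns_shift a k hk u v]
    have hR : t' (s (k - 1) (tprod ℂ a)) =
        ((-1 : ℂ)) ^ ((((k - 1 : Fin (n + 1)) : ℕ) + 1) + (n + 1)) •
          (uv.map fun p => tprod ℂ (slotIns (fun j => a (j - 1)) k p.1 p.2)).sum := by
      rw [h3, map_smul, map_list_sum, List.map_map]
      rw [show (uv.map (t' ∘ fun p => tprod ℂ (slotIns a (k - 1) p.1 p.2))) =
          uv.map (fun p => ((-1 : ℂ)) ^ (n + 1) •
            tprod ℂ (slotIns (fun j => a (j - 1)) k p.1 p.2)) from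
        List.map_congr_left fun p _ => by simpa using hel p.1 p.2]
      rw [show (uv.map (fun p => ((-1 : ℂ)) ^ (n + 1) •
            tprod ℂ (slotIns (fun j => a (j - 1)) k p.1 p.2))) =
          (uv.map fun p => tprod ℂ (slotIns (fun j => a (j - 1)) k p.1 p.2)).map
            (((-1 : ℂ)) ^ (n + 1) • ·) from List.map_map.symm]
      rw [← List.smul_sum, smul_smul, ← pow_add]
    have hmain : s k (t (tprod ℂ a)) = t' (s (k - 1) (tprod ℂ a)) := by
      rw [hL, hR, hj, show n + ((k : ℕ) + 1) = (((k : ℕ) - 1) + 1) + (n + 1) by omega]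
    rw [hmain, hT]

/-- If `T` is a cyclic linear functional on `A^{⊗(n+2)}` (i.e. `T ∘ t' = T`),
then `T(s^n(t x)) = T(s^n x)` for all `x ∈ A^{⊗(n+1)}`, where `s^n = Σ_{k=1}^{n+1} s^n_k`. -/
theorem cyclic_functional_s_shift (n : ℕ) (ρ : A →ₗ[ℂ] A ⊗[ℂ] A)
    (s : Fin (n + 1) → (Ch A n →ₗ[ℂ] Ch A (n + 1))) (hs : ∀ k, IsS ρ n k (s k))
    (t : Ch A n →ₗ[ℂ] Ch A n) (ht : IsCyclicShift n t)
    (t' : Ch A (n + 1) →ₗ[ℂ] Ch A (n + 1)) (ht' : IsCyclicShift (n + 1) t')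
    (T : Ch A (n + 1) →ₗ[ℂ] ℂ) (hT : ∀ x, T (t' x) = T x) :
    ∀ x : Ch A n, T ((∑ k, s k) (t x)) = T ((∑ k, s k) x) := by
  have hlin : ∀ (k : Fin (n + 1)) (x : Ch A n), T (s k (t x)) = T (s (k - 1) x) := by
    intro k x
    induction x using PiTensorProduct.induction_on with
    | smul_tprod r a =>
        simp only [map_smul, smul_eq_mul]
        rw [key_aux n ρ s hs t ht t' ht' T hT k a]
    | add x y hx hy => simp only [map_add, hx, hy]
  intro x
  simp only [LinearMap.sum_apply, map_sum]
  calc ∑ k, T (s k (t x)) = ∑ k, T (s (k - 1) x) :=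
        Finset.sum_congr rfl fun k _ => hlin k x
    _ = ∑ k, T (s k x) :=
        Equiv.sum_comp (Equiv.subRight (1 : Fin (n + 1))) (fun k => T (s k x))
end

section
/- Let A be the reduced Cuntz algebra and let ρ be the linear map on A defined on a basis element a = p_α q_β with |α| = N, |β| = M by ρ(p_α q_β) = Σ_{k=0}^{N-1} p_{α_{[1,k]}} ⊗ p_{α_{[k+1,N]}} q_β + Σ_{l=1}^{M} p_α q_{β_{[l+1,M]}} ⊗ q_{β_{[1,l]}} (where the k=0 term is 1 ⊗ p_α q_β and the l=M term is p_α ⊗ q_β, and ρ(1) = 0). If a = p_{α₁} q_{β₁} and b = p_{α₂} q_{β₂} with β₁ empty or α₂ empty (no transition at a), then ρ(ab) = a·ρ(b) + ρ(a)·b, where A ⊗ A carries the bimodule actions a·(u⊗v) = au⊗v and (u⊗v)·b = u⊗vb. -/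
open scoped TensorProduct

/-- `b` is a basis of a ℂ-algebra `A` indexed by pairs of strings `(α, β)` over
`{1, …, m}` (with `b (α, β)` representing `p_α q_β`) making `A` the reduced Cuntz
algebra `ℂ[O_m]/ℂz_0`: `b ([], []) = 1`, the products obey
`(p_α q_{βγ})(p_β q_{β'}) = p_α q_{β'γ}` and `(p_α q_β)(p_{βγ} q_{β'}) = p_{αγ} q_{β'}`,
and `(p_α q_β)(p_γ q_δ) = 0` when neither of `β, γ` is a prefix of the other. -/
def IsCuntzBasis {m : ℕ} {A : Type} [Ring A] [Algebra ℂ A]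
    (b : Module.Basis (List (Fin m) × List (Fin m)) ℂ A) : Prop :=
  b ([], []) = 1 ∧
  (∀ α β β' γ : List (Fin m), b (α, β ++ γ) * b (β, β') = b (α, β' ++ γ)) ∧
  (∀ α β β' γ : List (Fin m), b (α, β) * b (β ++ γ, β') = b (α ++ γ, β')) ∧
  (∀ α β γ δ : List (Fin m), ¬ β <+: γ → ¬ γ <+: β → b (α, β) * b (γ, δ) = 0)

private lemma icc_to_range {E : Type*} [AddCommMonoid E] (M : ℕ) (f : ℕ → E) :
    ∑ l ∈ Finset.Icc 1 M, f l = ∑ j ∈ Finset.range M, f (j + 1) := by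
  rw [← Finset.Ico_add_one_right_eq_Icc, Finset.sum_Ico_eq_sum_range]
  simp [add_comm]


/-- For the reduced Cuntz algebra `A`, the splitting map
`ρ(p_α q_β) = Σ_{k=0}^{N-1} p_{α_{[1,k]}} ⊗ p_{α_{[k+1,N]}} q_β
            + Σ_{l=1}^{M} p_α q_{β_{[l+1,M]}} ⊗ q_{β_{[1,l]}}`
satisfies the derivation identity `ρ(ab) = a·ρ(b) + ρ(a)·b` (with the outer
bimodule actions on `A ⊗ A`) whenever there is no transition at
`a = p_{α₁} q_{β₁}`, i.e. whenever `β₁` or `α₂` is empty. -/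
theorem cuntz_split_derivation_no_transition {m : ℕ} {A : Type} [Ring A] [Algebra ℂ A]
    (b : Module.Basis (List (Fin m) × List (Fin m)) ℂ A) (hb : IsCuntzBasis b)
    (ρ : A →ₗ[ℂ] A ⊗[ℂ] A)
    (hρ : ∀ α β : List (Fin m),
      ρ (b (α, β)) =
        (∑ k ∈ Finset.range α.length, b (α.take k, []) ⊗ₜ[ℂ] b (α.drop k, β)) +
        ∑ l ∈ Finset.Icc 1 β.length, b (α, β.drop l) ⊗ₜ[ℂ] b ([], β.take l))
    (α₁ β₁ α₂ β₂ : List (Fin m)) (hnt : β₁ = [] ∨ α₂ = []) :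
    ρ (b (α₁, β₁) * b (α₂, β₂)) =
      LinearMap.rTensor A (LinearMap.mulLeft ℂ (b (α₁, β₁))) (ρ (b (α₂, β₂))) +
      LinearMap.lTensor A (LinearMap.mulRight ℂ (b (α₂, β₂))) (ρ (b (α₁, β₁))) := by
  obtain ⟨hb1, hb2, hb3, hb4⟩ := hb
  rcases hnt with h | h <;> subst h
  · -- β₁ = []
    have e1 : ∀ γ δ : List (Fin m), b (α₁, []) * b (γ, δ) = b (α₁ ++ γ, δ) := by
      intro γ δ; simpa using hb3 α₁ [] δ γ
    have e2 : ∀ γ δ : List (Fin m), b (γ, []) * b (α₂, δ) = b (γ ++ α₂, δ) := by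
      intro γ δ; simpa using hb3 γ [] δ α₂
    rw [e1 α₂ β₂, hρ, hρ, hρ]
    simp only [map_add, map_sum, LinearMap.rTensor_tmul, LinearMap.lTensor_tmul,
      LinearMap.mulLeft_apply, LinearMap.mulRight_apply, e1, e2,
      List.length_nil, Finset.Icc_self, Finset.Icc_eq_empty_of_lt, Nat.lt_one_iff,
      List.length_append]
    rw [Finset.sum_range_add]
    have hA : ∑ k ∈ Finset.range α₁.length,
        b ((α₁ ++ α₂).take k, []) ⊗ₜ[ℂ] b ((α₁ ++ α₂).drop k, β₂) =
        ∑ k ∈ Finset.range α₁.length,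
        b (α₁.take k, []) ⊗ₜ[ℂ] b (α₁.drop k ++ α₂, β₂) :=
      Finset.sum_congr rfl fun k hk => by
        have hk' : k ≤ α₁.length := le_of_lt (Finset.mem_range.mp hk)
        rw [List.take_append_of_le_length hk', List.drop_append_of_le_length hk']
    have hB : ∑ k ∈ Finset.range α₂.length,
        b ((α₁ ++ α₂).take (α₁.length + k), []) ⊗ₜ[ℂ] b ((α₁ ++ α₂).drop (α₁.length + k), β₂) =
        ∑ k ∈ Finset.range α₂.length,
        b (α₁ ++ α₂.take k, []) ⊗ₜ[ℂ] b (α₂.drop k, β₂) :=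
      Finset.sum_congr rfl fun k _ => by
        rw [List.take_length_add_append, List.drop_length_add_append]
    rw [hA, hB]
    abel
  · -- α₂ = []
    have e1 : ∀ γ δ : List (Fin m), b (γ, δ ++ β₁) * b (δ, β₂) = b (γ, β₂ ++ β₁) := by
      intro γ δ; exact hb2 γ δ β₂ β₁
    have e1' : ∀ γ : List (Fin m), b (γ, β₁) * b ([], β₂) = b (γ, β₂ ++ β₁) := by
      intro γ; simpa using hb2 γ [] β₂ β₁
    have e2 : ∀ γ δ : List (Fin m), b (γ, δ) * b ([], β₂) = b (γ, β₂ ++ δ) := by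
      intro γ δ; simpa using hb2 γ [] β₂ δ
    rw [e1' α₁, hρ, hρ, hρ]
    simp only [map_add, map_sum, LinearMap.rTensor_tmul, LinearMap.lTensor_tmul,
      LinearMap.mulLeft_apply, LinearMap.mulRight_apply, e2,
      List.length_nil, Finset.range_zero, Finset.sum_empty, List.length_append]
    rw [icc_to_range, icc_to_range, icc_to_range, Finset.sum_range_add]
    have hA : ∑ j ∈ Finset.range β₂.length,
        b (α₁, (β₂ ++ β₁).drop (j + 1)) ⊗ₜ[ℂ] b ([], (β₂ ++ β₁).take (j + 1)) =
        ∑ j ∈ Finset.range β₂.length,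
        (b (α₁, β₁) * b ([], β₂.drop (j + 1))) ⊗ₜ[ℂ] b ([], β₂.take (j + 1)) :=
      Finset.sum_congr rfl fun j hj => by
        have hj' : j + 1 ≤ β₂.length := Finset.mem_range.mp hj
        have e3 : b (α₁, β₁) * b ([], β₂.drop (j + 1)) = b (α₁, β₂.drop (j + 1) ++ β₁) := by
          simpa using hb2 α₁ [] (β₂.drop (j + 1)) β₁
        rw [List.take_append_of_le_length hj', List.drop_append_of_le_length hj', e3]
    have hB : ∑ j ∈ Finset.range β₁.length,
        b (α₁, (β₂ ++ β₁).drop (β₂.length + j + 1)) ⊗ₜ[ℂ]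
          b ([], (β₂ ++ β₁).take (β₂.length + j + 1)) =
        ∑ j ∈ Finset.range β₁.length,
        b (α₁, β₁.drop (j + 1)) ⊗ₜ[ℂ] b ([], β₂ ++ β₁.take (j + 1)) :=
      Finset.sum_congr rfl fun j _ => by
        rw [add_assoc, List.take_length_add_append, List.drop_length_add_append]
    rw [hA, hB]
    abel
end

section
/- Let A = ℂ[O_m]/ℂz_0 be the reduced Cuntz algebra and λ ∈ ℂ. Define τ : A → ℂ by τ(p_β q_β) = λ for every string β (including the empty string, giving τ(1) = λ) and τ(p_α q_β) = 0 whenever α ≠ β. Then τ is a trace on A, i.e. τ(ab) = τ(ba) for all a, b ∈ A. -/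
open scoped TensorProduct

/-- The linear functional on the reduced Cuntz algebra defined by
`τ(p_β q_β) = λ` (for every string `β`, including `τ(1) = λ`) and
`τ(p_α q_β) = 0` for `α ≠ β` is a trace: `τ(ab) = τ(ba)`. -/
theorem cuntz_diagonal_functional_is_trace {m : ℕ} {A : Type} [Ring A] [Algebra ℂ A]
    (b : Module.Basis (List (Fin m) × List (Fin m)) ℂ A) (hb : IsCuntzBasis b)
    (lam : ℂ) (τ : A →ₗ[ℂ] ℂ)
    (hτ : ∀ α β : List (Fin m), τ (b (α, β)) = if α = β then lam else 0) :
    ∀ x y : A, τ (x * y) = τ (y * x) := by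
  classical
  obtain ⟨h1, h2, h3, h4⟩ := hb
  -- τ of a product of basis elements
  have key : ∀ α β γ δ : List (Fin m), τ (b (α, β) * b (γ, δ)) =
      if (∃ σ, γ = β ++ σ ∧ δ = α ++ σ) ∨ (∃ σ, β = γ ++ σ ∧ α = δ ++ σ) then lam else 0 := by
    intro α β γ δ
    by_cases hβγ : β <+: γ
    · obtain ⟨σ, rfl⟩ := hβγ
      rw [h3 α β δ σ, hτ]
      by_cases hd : α ++ σ = δ
      · rw [if_pos hd, if_pos (Or.inl ⟨σ, rfl, hd.symm⟩)]
      · rw [if_neg hd, if_neg]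
        rintro (⟨σ', hγ, hδ⟩ | ⟨σ', hβ, hα⟩)
        · have hσ : σ = σ' := List.append_cancel_left hγ
          exact hd (hσ ▸ hδ.symm)
        · rw [List.append_assoc] at hβ
          have hnil : σ ++ σ' = [] := (List.append_right_eq_self.mp hβ.symm)
          obtain ⟨hs, hs'⟩ := List.append_eq_nil_iff.mp hnil
          subst hs; subst hs'
          simp only [List.append_nil] at hα hd
          exact hd hα
    · by_cases hγβ : γ <+: β
      · obtain ⟨σ, rfl⟩ := hγβ
        rw [h2 α γ δ σ, hτ]
        by_cases hd : α = δ ++ σ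
        · rw [if_pos hd, if_pos (Or.inr ⟨σ, rfl, hd⟩)]
        · rw [if_neg hd, if_neg]
          rintro (⟨σ', hγ, hδ⟩ | ⟨σ', hβ, hα⟩)
          · rw [List.append_assoc] at hγ
            have hnil : σ ++ σ' = [] := (List.append_right_eq_self.mp hγ.symm)
            obtain ⟨hs, hs'⟩ := List.append_eq_nil_iff.mp hnil
            subst hs
            exact hβγ (by simp)
          · have hσ : σ = σ' := List.append_cancel_left hβ
            exact hd (hσ ▸ hα)
      · rw [h4 α β γ δ hβγ hγβ, map_zero, if_neg]
        rintro (⟨σ, hγ, _⟩ | ⟨σ, hβ, _⟩)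
        · exact hβγ ⟨σ, hγ.symm⟩
        · exact hγβ ⟨σ, hβ.symm⟩
  have key' : ∀ i j : List (Fin m) × List (Fin m), τ (b i * b j) = τ (b j * b i) := by
    rintro ⟨α, β⟩ ⟨γ, δ⟩
    rw [key, key]
    apply if_congr _ rfl rfl
    constructor
    · rintro (⟨σ, hs1, hs2⟩ | ⟨σ, hs1, hs2⟩)
      · exact Or.inr ⟨σ, hs2, hs1⟩
      · exact Or.inl ⟨σ, hs2, hs1⟩
    · rintro (⟨σ, hs1, hs2⟩ | ⟨σ, hs1, hs2⟩)
      · exact Or.inr ⟨σ, hs2, hs1⟩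
      · exact Or.inl ⟨σ, hs2, hs1⟩
  -- extend bilinearly
  have hB : (LinearMap.compr₂ (LinearMap.mul ℂ A) τ) =
      (LinearMap.compr₂ (LinearMap.mul ℂ A) τ).flip := by
    apply b.ext; intro i
    apply b.ext; intro j
    simpa using key' i j
  intro x y
  have := DFunLike.congr_fun (DFunLike.congr_fun hB x) y
  simpa using this
end

section
/- Let A = ℂ[O_m]/ℂz_0 be the reduced Cuntz algebra. The restriction map sending a trace τ on A to the pair (τ|_{ℂ[F_p]}, τ|_{ℂ[F_q]}) is injective: if two traces on A agree on the subalgebras generated by {p_α} and by {q_β}, then they are equal. -/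
open scoped TensorProduct

/-- The restriction map on traces of the reduced Cuntz algebra is injective:
two traces which agree on all elements `p_α` (the subalgebra `ℂ[F_p]`) and on all
elements `q_β` (the subalgebra `ℂ[F_q]`) are equal. -/
theorem cuntz_trace_restriction_injective {m : ℕ} {A : Type} [Ring A] [Algebra ℂ A]
    (b : Module.Basis (List (Fin m) × List (Fin m)) ℂ A) (hb : IsCuntzBasis b)
    (τ₁ τ₂ : A →ₗ[ℂ] ℂ)
    (h₁ : ∀ x y : A, τ₁ (x * y) = τ₁ (y * x))
    (h₂ : ∀ x y : A, τ₂ (x * y) = τ₂ (y * x))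
    (hp : ∀ α : List (Fin m), τ₁ (b (α, [])) = τ₂ (b (α, [])))
    (hq : ∀ β : List (Fin m), τ₁ (b ([], β)) = τ₂ (b ([], β))) :
    τ₁ = τ₂ := by
  obtain ⟨h1, hpq, hqp, h0⟩ := hb
  apply b.ext
  rintro ⟨α, β⟩
  have hmul : b (α, []) * b ([], β) = b (α, β) := by
    have := hqp α [] β []
    simpa using this
  have key : ∀ (τ : A →ₗ[ℂ] ℂ), (∀ x y, τ (x*y) = τ (y*x)) →
      τ (b (α, β)) = τ (b ([], β) * b (α, [])) := by
    intro τ h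
    rw [← hmul, h]
  rw [key τ₁ h₁, key τ₂ h₂]
  by_cases hba : β <+: α
  · obtain ⟨γ, rfl⟩ := hba
    have := hqp [] β [] γ
    simp only [List.nil_append] at this
    rw [this]
    exact hp γ
  · by_cases hab : α <+: β
    · obtain ⟨γ, rfl⟩ := hab
      have := hpq [] α [] γ
      simp only [List.nil_append] at this
      rw [this]
      exact hq γ
    · rw [h0 [] β α [] hba hab]
      simp
end
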